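/- Let e = (1,3,3,1) ∈ ℤ^4, so that Q_19(e) = 0, and let M = {x ∈ ℤ^4 : B_19(x, e) = 0}. Then the subgroup of M generated by e together with all roots of M (i.e., all r ∈ M with Q_19(r) > 0 such that Q_19(r) divides 2·B_19(r, x) for every x ∈ M) is a proper subgroup of M. -/

import Mathlib

/-- The bilinear form `B_p(x,y) = -p·x_0·y_0 + x_1·y_1 + … + x_n·y_n` on `ℤ^{n+1}`. -/
def Bform (p : ℤ) {n : ℕ} (x y : Fin (n + 1) → ℤ) : ℤ :=
  -p * x 0 * y 0 + ∑ i ∈ Finset.univ.filter (fun i : Fin (n + 1) => i ≠ 0), x i * y i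

/-- The quadratic form `Q_p(x) = B_p(x,x)`. -/
def Qform (p : ℤ) {n : ℕ} (x : Fin (n + 1) → ℤ) : ℤ := Bform p x x

/-- The primitive null vector `e`. -/
def eVec : Fin 4 → ℤ := ![1, 3, 3, 1]

/-!
For `r ∈ M` put `a = r₁ + r₂ - 6r₀` and `b = r₁ - r₂`; then `2·Q(r) = 19a² + b²`. Pairing a root `r`
with `(0,1,-1,0) ∈ M` gives `Q(r) ∣ 2b`, i.e. `19a² + b² ∣ 4b`, which is impossible when `a` and `b`
are odd. Hence every root, like `e`, has `r₁ + r₂` even, so they all lie in the proper subgroup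
`{x ∈ M : 2 ∣ x₁ + x₂}`.
-/

lemma Bform_fin_four (p : ℤ) (x y : Fin 4 → ℤ) :
    Bform p x y = -p * x 0 * y 0 + (x 1 * y 1 + x 2 * y 2 + x 3 * y 3) := by
  simp [Bform, Finset.sum_filter, Fin.sum_univ_four]

lemma Bform_eVec (x : Fin 4 → ℤ) : Bform 19 x eVec = -19 * x 0 + 3 * x 1 + 3 * x 2 + x 3 := by
  simp [Bform_fin_four, eVec]
  ring

lemma Qform_eVec : Qform 19 eVec = 0 := by
  rw [Qform, Bform_eVec]
  rfl

lemma two_mul_Qform_of_Bform_eVec {r : Fin 4 → ℤ} (hr : Bform 19 r eVec = 0) :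
    2 * Qform 19 r = 19 * (r 1 + r 2 - 6 * r 0) ^ 2 + (r 1 - r 2) ^ 2 := by
  rw [Bform_eVec] at hr
  rw [Qform, Bform_fin_four, show r 3 = 19 * r 0 - 3 * r 1 - 3 * r 2 by linarith]
  ring

lemma not_mul_sq_add_sq_dvd_four_mul {c a b : ℤ} (hc : 4 < c) (ha : a ≠ 0) (hb : b ≠ 0) :
    ¬ c * a ^ 2 + b ^ 2 ∣ 4 * b := by
  intro hdvd
  have hle : c * a ^ 2 + b ^ 2 ≤ |4 * b| := Int.le_of_dvd (by positivity) ((dvd_abs _ _).2 hdvd)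
  have ha2 : 1 ≤ a ^ 2 := by nlinarith [sq_pos_of_ne_zero ha]
  rw [abs_mul, abs_of_pos (by norm_num : (0 : ℤ) < 4), ← sq_abs b] at hle
  nlinarith [sq_nonneg (|b| - 2)]

lemma even_add_of_isRoot {r : Fin 4 → ℤ} (hr : Bform 19 r eVec = 0)
    (hroot : ∀ x : Fin 4 → ℤ, Bform 19 x eVec = 0 → Qform 19 r ∣ 2 * Bform 19 r x) :
    Even (r 1 + r 2) := by
  by_contra hodd
  obtain ⟨k, hk⟩ := Int.not_even_iff_odd.1 hodd
  have hdvd : Qform 19 r ∣ 2 * (r 1 - r 2) := by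
    simpa [Bform_fin_four, sub_eq_add_neg] using hroot ![0, 1, -1, 0] (by simp [Bform_eVec])
  have ha : r 1 + r 2 - 6 * r 0 ≠ 0 := by omega
  have hb : r 1 - r 2 ≠ 0 := by omega
  refine not_mul_sq_add_sq_dvd_four_mul (c := 19) (by norm_num) ha hb ?_
  rw [← two_mul_Qform_of_Bform_eVec hr, show (4 : ℤ) = 2 * 2 by norm_num, mul_assoc]
  exact mul_dvd_mul_left 2 hdvd

def evenOrthSubgroup : AddSubgroup (Fin 4 → ℤ) where
  carrier := {x | Bform 19 x eVec = 0 ∧ Even (x 1 + x 2)}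
  zero_mem' := by simp [Bform_eVec]
  add_mem' := by
    rintro a b ⟨ha, ha'⟩ ⟨hb, hb'⟩
    simp only [Set.mem_ofPred_eq, Bform_eVec, Pi.add_apply] at *
    exact ⟨by linarith, by simpa only [add_add_add_comm] using ha'.add hb'⟩
  neg_mem' := by
    rintro a ⟨ha, ha'⟩
    simp only [Set.mem_ofPred_eq, Bform_eVec, Pi.neg_apply] at *
    exact ⟨by linarith, by simpa only [neg_add] using ha'.neg⟩

lemma coe_evenOrthSubgroup_ssubset :
    (evenOrthSubgroup : Set (Fin 4 → ℤ)) ⊂ {x | Bform 19 x eVec = 0} := by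
  refine ⟨fun x hx => hx.1, fun hsup => ?_⟩
  have hv : ![0, 1, 0, -3] ∈ {x : Fin 4 → ℤ | Bform 19 x eVec = 0} := by simp [Bform_eVec]
  exact absurd (hsup hv).2 (by decide)

theorem stmt17 :
    Qform 19 eVec = 0 ∧
    ((AddSubgroup.closure (insert eVec
        {r : Fin 4 → ℤ | Bform 19 r eVec = 0 ∧ 0 < Qform 19 r ∧
          ∀ x : Fin 4 → ℤ, Bform 19 x eVec = 0 → Qform 19 r ∣ 2 * Bform 19 r x}) :
        Set (Fin 4 → ℤ)) ⊂ {x : Fin 4 → ℤ | Bform 19 x eVec = 0}) := by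
  refine ⟨Qform_eVec, ssubset_of_subset_of_ssubset ?_ coe_evenOrthSubgroup_ssubset⟩
  refine (AddSubgroup.closure_le _).2 (Set.insert_subset ⟨Qform_eVec, by decide⟩ ?_)
  exact fun r ⟨hr, _, hroot⟩ => ⟨hr, even_add_of_isRoot hr hroot⟩
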